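/- For any measurable scoring rule r : ℝ^d → ℝ, the AUC of r for distinguishing distributions P¹ from P⁰, defined as AUC_r = P(r(G₁) > r(G₀)) + ½ P(r(G₁) = r(G₀)) where G₁ ∼ P¹ and G₀ ∼ P⁰ are independent, satisfies AUC_r ≤ ½ + t − t²/2, where t = TV(P¹, P⁰) is the total variation distance. -/
import Mathlib


open MeasureTheory Real

/-- Total variation distance between two measures. -/
noncomputable def tvDist {Ω : Type*} [MeasurableSpace Ω] (P Q : Measure Ω) : ℝ :=
  ⨆ A : {A : Set Ω // MeasurableSet A}, |(P A).toReal - (Q A).toReal|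

/-- AUC of a scoring rule `r` for distinguishing `P1` from `P0`:
`P(r(G₁) > r(G₀)) + (1/2) P(r(G₁) = r(G₀))` for independent `G₁ ∼ P1`, `G₀ ∼ P0`. -/
noncomputable def auc {Ω : Type*} [MeasurableSpace Ω] (P1 P0 : Measure Ω) (r : Ω → ℝ) : ℝ :=
  ((P1.prod P0) {p | r p.2 < r p.1}).toReal
    + (1 / 2) * ((P1.prod P0) {p | r p.1 = r p.2}).toReal

section Aux

variable {Ω : Type*} [MeasurableSpace Ω] {r : Ω → ℝ}

lemma measurableSet_gtSet (hr : Measurable r) :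
    MeasurableSet {p : Ω × Ω | r p.2 < r p.1} :=
  measurableSet_lt (hr.comp measurable_snd) (hr.comp measurable_fst)

lemma measurableSet_ltSet (hr : Measurable r) :
    MeasurableSet {p : Ω × Ω | r p.1 < r p.2} :=
  measurableSet_lt (hr.comp measurable_fst) (hr.comp measurable_snd)

lemma measurableSet_eqSet (hr : Measurable r) :
    MeasurableSet {p : Ω × Ω | r p.1 = r p.2} := by
  have : {p : Ω × Ω | r p.1 = r p.2}
      = {p : Ω × Ω | r p.1 ≤ r p.2} ∩ {p : Ω × Ω | r p.2 ≤ r p.1} := by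
    ext p; simp [Set.mem_setOf_eq, le_antisymm_iff]
  rw [this]
  exact (measurableSet_le (hr.comp measurable_fst) (hr.comp measurable_snd)).inter
    (measurableSet_le (hr.comp measurable_snd) (hr.comp measurable_fst))

lemma auc_add_left (μ₁ μ₂ ν : Measure Ω) [IsFiniteMeasure μ₁] [IsFiniteMeasure μ₂]
    [IsFiniteMeasure ν] :
    auc (μ₁ + μ₂) ν r = auc μ₁ ν r + auc μ₂ ν r := by
  simp only [auc, Measure.add_prod, Measure.add_apply,
    ENNReal.toReal_add (measure_ne_top _ _) (measure_ne_top _ _)]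
  ring

lemma auc_add_right (μ ν₁ ν₂ : Measure Ω) [IsFiniteMeasure μ] [IsFiniteMeasure ν₁]
    [IsFiniteMeasure ν₂] :
    auc μ (ν₁ + ν₂) r = auc μ ν₁ r + auc μ ν₂ r := by
  simp only [auc, Measure.prod_add, Measure.add_apply,
    ENNReal.toReal_add (measure_ne_top _ _) (measure_ne_top _ _)]
  ring

lemma auc_le_mul (μ ν : Measure Ω) [IsFiniteMeasure μ] [IsFiniteMeasure ν]
    (hr : Measurable r) :
    auc μ ν r ≤ (μ Set.univ).toReal * (ν Set.univ).toReal := by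
  have hdisj : Disjoint {p : Ω × Ω | r p.2 < r p.1} {p : Ω × Ω | r p.1 = r p.2} := by
    rw [Set.disjoint_left]; intro p hp hp'; exact ne_of_gt hp hp'
  have hunion : (μ.prod ν) ({p : Ω × Ω | r p.2 < r p.1} ∪ {p : Ω × Ω | r p.1 = r p.2})
      = (μ.prod ν) {p : Ω × Ω | r p.2 < r p.1} + (μ.prod ν) {p : Ω × Ω | r p.1 = r p.2} :=
    measure_union hdisj (measurableSet_eqSet hr)
  have hle : (μ.prod ν) ({p : Ω × Ω | r p.2 < r p.1} ∪ {p : Ω × Ω | r p.1 = r p.2})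
      ≤ (μ.prod ν) Set.univ := measure_mono (Set.subset_univ _)
  have huniv : (μ.prod ν) Set.univ = μ Set.univ * ν Set.univ := by
    rw [← Set.univ_prod_univ, Measure.prod_prod]
  have h1 : ((μ.prod ν) {p : Ω × Ω | r p.2 < r p.1}).toReal
      + ((μ.prod ν) {p : Ω × Ω | r p.1 = r p.2}).toReal
      ≤ (μ Set.univ).toReal * (ν Set.univ).toReal := by
    have hnt : (μ Set.univ) * (ν Set.univ) ≠ ⊤ :=
      ENNReal.mul_ne_top (measure_ne_top _ _) (measure_ne_top _ _)
    rw [← ENNReal.toReal_add (measure_ne_top _ _) (measure_ne_top _ _), ← hunion,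
      ← ENNReal.toReal_mul, ← huniv]
    exact ENNReal.toReal_mono (by rw [huniv]; exact hnt) hle
  have h2 : (0:ℝ) ≤ ((μ.prod ν) {p : Ω × Ω | r p.1 = r p.2}).toReal := ENNReal.toReal_nonneg
  unfold auc; linarith

lemma auc_self (μ : Measure Ω) [IsFiniteMeasure μ] (hr : Measurable r) :
    auc μ μ r = (μ Set.univ).toReal ^ 2 / 2 := by
  have hswap : (μ.prod μ) {p : Ω × Ω | r p.2 < r p.1}
      = (μ.prod μ) {p : Ω × Ω | r p.1 < r p.2} := by
    have h := Measure.prod_swap (μ := μ) (ν := μ)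
    calc (μ.prod μ) {p : Ω × Ω | r p.2 < r p.1}
        = ((μ.prod μ).map Prod.swap) {p : Ω × Ω | r p.2 < r p.1} := by rw [h]
      _ = (μ.prod μ) (Prod.swap ⁻¹' {p : Ω × Ω | r p.2 < r p.1}) :=
          Measure.map_apply measurable_swap (measurableSet_gtSet hr)
      _ = (μ.prod μ) {p : Ω × Ω | r p.1 < r p.2} := rfl
  have hd1 : Disjoint {p : Ω × Ω | r p.2 < r p.1} {p : Ω × Ω | r p.1 < r p.2} := by
    rw [Set.disjoint_left]
    intro p hp hp'
    simp only [Set.mem_setOf_eq] at hp hp'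
    exact lt_asymm hp hp'
  have hd2 : Disjoint ({p : Ω × Ω | r p.2 < r p.1} ∪ {p : Ω × Ω | r p.1 < r p.2})
      {p : Ω × Ω | r p.1 = r p.2} := by
    rw [Set.disjoint_left]; rintro p (hp | hp) hp'
    · exact ne_of_gt hp hp'
    · exact ne_of_lt hp hp'
  have hcover : ({p : Ω × Ω | r p.2 < r p.1} ∪ {p : Ω × Ω | r p.1 < r p.2})
      ∪ {p : Ω × Ω | r p.1 = r p.2} = Set.univ := by
    ext p; simp only [Set.mem_union, Set.mem_setOf_eq, Set.mem_univ, iff_true]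
    rcases lt_trichotomy (r p.1) (r p.2) with h | h | h
    · exact Or.inl (Or.inr h)
    · exact Or.inr h
    · exact Or.inl (Or.inl h)
  have htotal : (μ.prod μ) {p : Ω × Ω | r p.2 < r p.1}
      + (μ.prod μ) {p : Ω × Ω | r p.1 < r p.2}
      + (μ.prod μ) {p : Ω × Ω | r p.1 = r p.2} = μ Set.univ * μ Set.univ := by
    rw [← measure_union hd1 (measurableSet_ltSet hr), ← measure_union hd2 (measurableSet_eqSet hr),
      hcover, ← Set.univ_prod_univ, Measure.prod_prod]
  have htotal' : ((μ.prod μ) {p : Ω × Ω | r p.2 < r p.1}).toReal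
      + ((μ.prod μ) {p : Ω × Ω | r p.1 < r p.2}).toReal
      + ((μ.prod μ) {p : Ω × Ω | r p.1 = r p.2}).toReal
      = (μ Set.univ).toReal * (μ Set.univ).toReal := by
    rw [← ENNReal.toReal_mul, ← htotal,
      ENNReal.toReal_add (by finiteness) (measure_ne_top _ _),
      ENNReal.toReal_add (measure_ne_top _ _) (measure_ne_top _ _)]
  have hswap' : ((μ.prod μ) {p : Ω × Ω | r p.2 < r p.1}).toReal
      = ((μ.prod μ) {p : Ω × Ω | r p.1 < r p.2}).toReal := by rw [hswap]
  unfold auc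
  nlinarith [htotal', hswap']

end Aux

theorem auc_le_of_tv {d : ℕ}
    (P1 P0 : Measure (Fin d → ℝ)) [IsProbabilityMeasure P1] [IsProbabilityMeasure P0]
    (r : (Fin d → ℝ) → ℝ) (hr : Measurable r) :
    auc P1 P0 r ≤ 1 / 2 + tvDist P1 P0 - tvDist P1 P0 ^ 2 / 2 := by
  obtain ⟨S, hS, hSle, hScle⟩ := hahn_decomposition (μ := P1) (ν := P0)
  set f : Set (Fin d → ℝ) → ℝ := fun A => (P1 A).toReal with hf
  set g : Set (Fin d → ℝ) → ℝ := fun A => (P0 A).toReal with hg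
  set t : ℝ := f S - g S with ht
  -- basic facts
  have hgleS : P0 S ≤ P1 S := hSle S hS subset_rfl
  have ht0 : 0 ≤ t := by
    simp only [ht, hf, hg, sub_nonneg]
    exact ENNReal.toReal_mono (measure_ne_top _ _) hgleS
  have hfS1 : f S + f Sᶜ = 1 := by
    simp only [hf]
    rw [← ENNReal.toReal_add (measure_ne_top _ _) (measure_ne_top _ _),
      measure_add_measure_compl hS, measure_univ, ENNReal.toReal_one]
  have hgS1 : g S + g Sᶜ = 1 := by
    simp only [hg]
    rw [← ENNReal.toReal_add (measure_ne_top _ _) (measure_ne_top _ _),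
      measure_add_measure_compl hS, measure_univ, ENNReal.toReal_one]
  -- key bound: for every measurable A, f A - g A ≤ t
  have key : ∀ A : Set (Fin d → ℝ), MeasurableSet A → f A - g A ≤ t := by
    intro A hA
    have hsplit1 : P1 A = P1 (A ∩ S) + P1 (A \ S) := (measure_inter_add_diff A hS).symm
    have hsplit0 : P0 A = P0 (A ∩ S) + P0 (A \ S) := (measure_inter_add_diff A hS).symm
    have hsplitS1 : P1 S = P1 (S ∩ A) + P1 (S \ A) := (measure_inter_add_diff S hA).symm
    have hsplitS0 : P0 S = P0 (S ∩ A) + P0 (S \ A) := (measure_inter_add_diff S hA).symm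
    have h1 : P1 (A \ S) ≤ P0 (A \ S) :=
      hScle (A \ S) (hA.diff hS) (fun x hx => hx.2)
    have h2 : P0 (S \ A) ≤ P1 (S \ A) := hSle (S \ A) (hS.diff hA) Set.diff_subset
    have hAS : A ∩ S = S ∩ A := Set.inter_comm A S
    have e1 : f A = (P1 (A ∩ S)).toReal + (P1 (A \ S)).toReal := by
      simp only [hf]
      rw [hsplit1, ENNReal.toReal_add (measure_ne_top _ _) (measure_ne_top _ _)]
    have e0 : g A = (P0 (A ∩ S)).toReal + (P0 (A \ S)).toReal := by
      simp only [hg]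
      rw [hsplit0, ENNReal.toReal_add (measure_ne_top _ _) (measure_ne_top _ _)]
    have eS1 : f S = (P1 (A ∩ S)).toReal + (P1 (S \ A)).toReal := by
      simp only [hf, hAS]
      rw [hsplitS1, ENNReal.toReal_add (measure_ne_top _ _) (measure_ne_top _ _)]
    have eS0 : g S = (P0 (A ∩ S)).toReal + (P0 (S \ A)).toReal := by
      simp only [hg, hAS]
      rw [hsplitS0, ENNReal.toReal_add (measure_ne_top _ _) (measure_ne_top _ _)]
    have h1' : (P1 (A \ S)).toReal ≤ (P0 (A \ S)).toReal :=
      ENNReal.toReal_mono (measure_ne_top _ _) h1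
    have h2' : (P0 (S \ A)).toReal ≤ (P1 (S \ A)).toReal :=
      ENNReal.toReal_mono (measure_ne_top _ _) h2
    rw [ht]; linarith
  -- total variation distance equals t
  have htv : tvDist P1 P0 = t := by
    apply le_antisymm
    · apply ciSup_le
      rintro ⟨A, hA⟩
      rw [abs_le]
      constructor
      · have hcompl : g Aᶜ - f Aᶜ = f A - g A - (f S - g S) + t := by
          have hfA : f A + f Aᶜ = 1 := by
            simp only [hf]
            rw [← ENNReal.toReal_add (measure_ne_top _ _) (measure_ne_top _ _),
              measure_add_measure_compl hA, measure_univ, ENNReal.toReal_one]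
          have hgA : g A + g Aᶜ = 1 := by
            simp only [hg]
            rw [← ENNReal.toReal_add (measure_ne_top _ _) (measure_ne_top _ _),
              measure_add_measure_compl hA, measure_univ, ENNReal.toReal_one]
          rw [ht]; linarith
        have := key Aᶜ hA.compl
        have hfA : f A + f Aᶜ = 1 := by
          simp only [hf]
          rw [← ENNReal.toReal_add (measure_ne_top _ _) (measure_ne_top _ _),
            measure_add_measure_compl hA, measure_univ, ENNReal.toReal_one]
        have hgA : g A + g Aᶜ = 1 := by
          simp only [hg]
          rw [← ENNReal.toReal_add (measure_ne_top _ _) (measure_ne_top _ _),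
            measure_add_measure_compl hA, measure_univ, ENNReal.toReal_one]
        linarith
      · exact key A hA
    · have hb : BddAbove (Set.range fun A : {A : Set (Fin d → ℝ) // MeasurableSet A} =>
          |(P1 A).toReal - (P0 A).toReal|) := by
        refine ⟨t, ?_⟩
        rintro x ⟨⟨A, hA⟩, rfl⟩
        rw [abs_le]
        constructor
        · have hfA : f A + f Aᶜ = 1 := by
            simp only [hf]
            rw [← ENNReal.toReal_add (measure_ne_top _ _) (measure_ne_top _ _),
              measure_add_measure_compl hA, measure_univ, ENNReal.toReal_one]
          have hgA : g A + g Aᶜ = 1 := by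
            simp only [hg]
            rw [← ENNReal.toReal_add (measure_ne_top _ _) (measure_ne_top _ _),
              measure_add_measure_compl hA, measure_univ, ENNReal.toReal_one]
          have := key Aᶜ hA.compl
          linarith
        · exact key A hA
      have := le_ciSup hb ⟨S, hS⟩
      calc t = |f S - g S| := (abs_of_nonneg ht0).symm
        _ ≤ _ := this
  -- decomposition of the measures
  have hres1 : P0.restrict S ≤ P1.restrict S := by
    refine Measure.le_intro fun A hA _ => ?_
    rw [Measure.restrict_apply hA, Measure.restrict_apply hA]
    exact hSle (A ∩ S) (hA.inter hS) Set.inter_subset_right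
  have hres0 : P1.restrict Sᶜ ≤ P0.restrict Sᶜ := by
    refine Measure.le_intro fun A hA _ => ?_
    rw [Measure.restrict_apply hA, Measure.restrict_apply hA]
    exact hScle (A ∩ Sᶜ) (hA.inter hS.compl) Set.inter_subset_right
  set δ1 : Measure (Fin d → ℝ) := P1.restrict S - P0.restrict S with hδ1
  set δ0 : Measure (Fin d → ℝ) := P0.restrict Sᶜ - P1.restrict Sᶜ with hδ0
  set ρ : Measure (Fin d → ℝ) := P0.restrict S + P1.restrict Sᶜ with hρ
  have hP1eq : δ1 + ρ = P1 := by
    rw [hδ1, hρ, ← add_assoc, Measure.sub_add_cancel_of_le hres1,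
      Measure.restrict_add_restrict_compl hS]
  have hP0eq : δ0 + ρ = P0 := by
    rw [hδ0, hρ, add_comm (P0.restrict S) (P1.restrict Sᶜ), ← add_assoc,
      Measure.sub_add_cancel_of_le hres0, add_comm,
      Measure.restrict_add_restrict_compl hS]
  haveI inst1 : IsFiniteMeasure δ1 := isFiniteMeasure_of_le (P1.restrict S) Measure.sub_le
  haveI inst0 : IsFiniteMeasure δ0 := isFiniteMeasure_of_le (P0.restrict Sᶜ) Measure.sub_le
  haveI instρ : IsFiniteMeasure ρ := by rw [hρ]; infer_instance
  -- masses
  have hδ1univ : (δ1 Set.univ).toReal = t := by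
    rw [hδ1, Measure.sub_apply MeasurableSet.univ hres1, Measure.restrict_apply_univ,
      Measure.restrict_apply_univ, ENNReal.toReal_sub_of_le hgleS (measure_ne_top _ _)]
  have hδ0univ : (δ0 Set.univ).toReal = t := by
    rw [hδ0, Measure.sub_apply MeasurableSet.univ hres0, Measure.restrict_apply_univ,
      Measure.restrict_apply_univ,
      ENNReal.toReal_sub_of_le (hScle Sᶜ hS.compl subset_rfl) (measure_ne_top _ _)]
    show g Sᶜ - f Sᶜ = t
    rw [ht]; linarith
  have hρuniv : (ρ Set.univ).toReal = 1 - t := by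
    rw [hρ, Measure.add_apply, Measure.restrict_apply_univ, Measure.restrict_apply_univ,
      ENNReal.toReal_add (measure_ne_top _ _) (measure_ne_top _ _)]
    show g S + f Sᶜ = 1 - t
    rw [ht]; linarith
  -- split the AUC
  have hsplit : auc P1 P0 r = auc δ1 δ0 r + auc δ1 ρ r + auc ρ δ0 r + auc ρ ρ r := by
    rw [← hP1eq, ← hP0eq, auc_add_left δ1 ρ (δ0 + ρ), auc_add_right δ1 δ0 ρ,
      auc_add_right ρ δ0 ρ]
    ring
  have b1 : auc δ1 δ0 r ≤ t * t := by
    have := auc_le_mul (r := r) δ1 δ0 hr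
    rwa [hδ1univ, hδ0univ] at this
  have b2 : auc δ1 ρ r ≤ t * (1 - t) := by
    have := auc_le_mul (r := r) δ1 ρ hr
    rwa [hδ1univ, hρuniv] at this
  have b3 : auc ρ δ0 r ≤ (1 - t) * t := by
    have := auc_le_mul (r := r) ρ δ0 hr
    rwa [hρuniv, hδ0univ] at this
  have b4 : auc ρ ρ r = (1 - t) ^ 2 / 2 := by
    have := auc_self (r := r) ρ hr
    rwa [hρuniv] at this
  rw [htv, hsplit]
  nlinarith [b1, b2, b3, b4]
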